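/- For n = 2 the spectral order has the following elementary description under the Bloch-ball representation Ω² ≅ {(x,y,z) ∈ ℝ³ : x² + y² + z² ≤ 1} (given by ρ = (I + xσₓ + yσ_y + zσ_z)/2 with σₓ, σ_y, σ_z the Pauli matrices): for ρ, σ ∈ Ω² with Bloch vectors u, v ∈ ℝ³, ρ ⊑ σ if and only if u lies on the line segment from the origin to v, i.e. there is t ∈ [0,1] with u = t·v. -/
import Mathlib


open scoped Matrix

/-- The Bayesian order on Δⁿ (symmetric characterization). -/
def bayesLE {n : ℕ} (x y : Fin n → ℝ) : Prop :=
  ∃ σ : Equiv.Perm (Fin n),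
    Antitone (fun i => x (σ i)) ∧ Antitone (fun i => y (σ i)) ∧
    ∀ i j : Fin n, (i : ℕ) + 1 = (j : ℕ) →
      x (σ i) * y (σ j) ≤ x (σ j) * y (σ i)

/-- The spectral order on density matrices. -/
def specLE {n : ℕ} (ρ σ : Matrix (Fin n) (Fin n) ℂ) : Prop :=
  ∃ U : Matrix (Fin n) (Fin n) ℂ, U ∈ Matrix.unitaryGroup (Fin n) ℂ ∧
    (Uᴴ * ρ * U).IsDiag ∧ (Uᴴ * σ * U).IsDiag ∧
    bayesLE (fun i => ((Uᴴ * ρ * U) i i).re) (fun i => ((Uᴴ * σ * U) i i).re)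

/-- The Pauli matrices. -/
def pauliX : Matrix (Fin 2) (Fin 2) ℂ := !![0, 1; 1, 0]
def pauliY : Matrix (Fin 2) (Fin 2) ℂ := !![0, -Complex.I; Complex.I, 0]
def pauliZ : Matrix (Fin 2) (Fin 2) ℂ := !![1, 0; 0, -1]

/-- The density matrix with Bloch vector u ∈ ℝ³: ρ = (I + u₁σₓ + u₂σ_y + u₃σ_z)/2. -/
noncomputable def bloch (u : Fin 3 → ℝ) : Matrix (Fin 2) (Fin 2) ℂ :=
  (2 : ℂ)⁻¹ • ((1 : Matrix (Fin 2) (Fin 2) ℂ) +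
    (u 0 : ℂ) • pauliX + (u 1 : ℂ) • pauliY + (u 2 : ℂ) • pauliZ)

set_option linter.unreachableTactic false
set_option linter.unusedTactic false
set_option maxHeartbeats 1000000

lemma bloch_eq (u : Fin 3 → ℝ) : bloch u =
    !![(1 + (u 2:ℂ))/2, ((u 0:ℂ) - (u 1:ℂ)*Complex.I)/2;
       ((u 0:ℂ) + (u 1:ℂ)*Complex.I)/2, (1 - (u 2:ℂ))/2] := by
  ext i j
  fin_cases i <;> fin_cases j <;>
    simp [bloch, pauliX, pauliY, pauliZ, Matrix.add_apply, Matrix.smul_apply, Matrix.one_apply] <;>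
    ring

lemma antitone_fin2 {f : Fin 2 → ℝ} (h : f 1 ≤ f 0) : Antitone f := by
  intro i j hij
  fin_cases i <;> fin_cases j <;> simp_all

lemma bayesLE_of_id {x y : Fin 2 → ℝ} (hx : x 1 ≤ x 0) (hy : y 1 ≤ y 0)
    (hxy : x 0 * y 1 ≤ x 1 * y 0) : bayesLE x y := by
  refine ⟨1, antitone_fin2 (by simpa using hx), antitone_fin2 (by simpa using hy), ?_⟩
  intro i j hij
  fin_cases i <;> fin_cases j <;> simp_all

lemma bayesLE_of_swap {x y : Fin 2 → ℝ} (hx : x 0 ≤ x 1) (hy : y 0 ≤ y 1)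
    (hxy : x 1 * y 0 ≤ x 0 * y 1) : bayesLE x y := by
  refine ⟨Equiv.swap 0 1, antitone_fin2 ?_, antitone_fin2 ?_, ?_⟩
  · simpa [Equiv.swap_apply_left, Equiv.swap_apply_right] using hx
  · simpa [Equiv.swap_apply_left, Equiv.swap_apply_right] using hy
  · intro i j hij
    fin_cases i <;> fin_cases j <;> simp_all [Equiv.swap_apply_left, Equiv.swap_apply_right]
section
variable (a b c r n1 n2 : ℝ)

-- the unitary diagonalizing a Bloch matrix with (a,b) ≠ 0
noncomputable def Ud : Matrix (Fin 2) (Fin 2) ℂ :=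
  !![((a:ℂ) - b*Complex.I)/n1, ((a:ℂ) - b*Complex.I)/n2;
     ((r:ℂ)-c)/n1, -((r:ℂ)+c)/n2]

lemma Ud_unitary (hr2 : r^2 = a^2+b^2+c^2) (hn1 : n1^2 = 2*r*(r-c)) (hn2 : n2^2 = 2*r*(r+c))
    (hn1p : 0 < n1) (hn2p : 0 < n2) :
    star (Ud a b c r n1 n2) * Ud a b c r n1 n2 = 1 := by
  have h1 : (n1:ℂ) ≠ 0 := by exact_mod_cast hn1p.ne'
  have h2 : (n2:ℂ) ≠ 0 := by exact_mod_cast hn2p.ne'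
  have hr2' : (r:ℂ)^2 = (a:ℂ)^2+(b:ℂ)^2+(c:ℂ)^2 := by exact_mod_cast hr2
  have hn1' : (n1:ℂ)^2 = 2*r*((r:ℂ)-c) := by exact_mod_cast hn1
  have hn2' : (n2:ℂ)^2 = 2*r*((r:ℂ)+c) := by exact_mod_cast hn2
  ext i j
  fin_cases i <;> fin_cases j <;>
    · simp [Ud, Matrix.mul_apply, Fin.sum_univ_two, Matrix.star_apply, Matrix.one_apply,
        map_div₀, map_sub, map_add, map_mul, Complex.conj_ofReal]
      field_simp
      ring_nf
      first
      | linear_combination (-(b:ℂ)^2)*Complex.I_sq + (-1)*hn1' + (-1)*hn2' + (-3)*hr2'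
      | linear_combination (-(b:ℂ)^2)*Complex.I_sq + (-1)*hn1' + (-1)*hn2' + (-2)*hr2'
      | linear_combination (-(b:ℂ)^2)*Complex.I_sq + (-1)*hn1' + (-1)*hn2' + (-1)*hr2'
      | linear_combination (-(b:ℂ)^2)*Complex.I_sq + (-1)*hn1' + (-1)*hn2' + (0)*hr2'
      | linear_combination (-(b:ℂ)^2)*Complex.I_sq + (-1)*hn1' + (-1)*hn2' + (1)*hr2'
      | linear_combination (-(b:ℂ)^2)*Complex.I_sq + (-1)*hn1' + (-1)*hn2' + (2)*hr2'
      | linear_combination (-(b:ℂ)^2)*Complex.I_sq + (-1)*hn1' + (-1)*hn2' + (3)*hr2'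
      | linear_combination (-(b:ℂ)^2)*Complex.I_sq + (-1)*hn1' + (0)*hn2' + (-3)*hr2'
      | linear_combination (-(b:ℂ)^2)*Complex.I_sq + (-1)*hn1' + (0)*hn2' + (-2)*hr2'
      | linear_combination (-(b:ℂ)^2)*Complex.I_sq + (-1)*hn1' + (0)*hn2' + (-1)*hr2'
      | linear_combination (-(b:ℂ)^2)*Complex.I_sq + (-1)*hn1' + (0)*hn2' + (0)*hr2'
      | linear_combination (-(b:ℂ)^2)*Complex.I_sq + (-1)*hn1' + (0)*hn2' + (1)*hr2'
      | linear_combination (-(b:ℂ)^2)*Complex.I_sq + (-1)*hn1' + (0)*hn2' + (2)*hr2'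
      | linear_combination (-(b:ℂ)^2)*Complex.I_sq + (-1)*hn1' + (0)*hn2' + (3)*hr2'
      | linear_combination (-(b:ℂ)^2)*Complex.I_sq + (-1)*hn1' + (1)*hn2' + (-3)*hr2'
      | linear_combination (-(b:ℂ)^2)*Complex.I_sq + (-1)*hn1' + (1)*hn2' + (-2)*hr2'
      | linear_combination (-(b:ℂ)^2)*Complex.I_sq + (-1)*hn1' + (1)*hn2' + (-1)*hr2'
      | linear_combination (-(b:ℂ)^2)*Complex.I_sq + (-1)*hn1' + (1)*hn2' + (0)*hr2'
      | linear_combination (-(b:ℂ)^2)*Complex.I_sq + (-1)*hn1' + (1)*hn2' + (1)*hr2'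
      | linear_combination (-(b:ℂ)^2)*Complex.I_sq + (-1)*hn1' + (1)*hn2' + (2)*hr2'
      | linear_combination (-(b:ℂ)^2)*Complex.I_sq + (-1)*hn1' + (1)*hn2' + (3)*hr2'
      | linear_combination (-(b:ℂ)^2)*Complex.I_sq + (0)*hn1' + (-1)*hn2' + (-3)*hr2'
      | linear_combination (-(b:ℂ)^2)*Complex.I_sq + (0)*hn1' + (-1)*hn2' + (-2)*hr2'
      | linear_combination (-(b:ℂ)^2)*Complex.I_sq + (0)*hn1' + (-1)*hn2' + (-1)*hr2'
      | linear_combination (-(b:ℂ)^2)*Complex.I_sq + (0)*hn1' + (-1)*hn2' + (0)*hr2'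
      | linear_combination (-(b:ℂ)^2)*Complex.I_sq + (0)*hn1' + (-1)*hn2' + (1)*hr2'
      | linear_combination (-(b:ℂ)^2)*Complex.I_sq + (0)*hn1' + (-1)*hn2' + (2)*hr2'
      | linear_combination (-(b:ℂ)^2)*Complex.I_sq + (0)*hn1' + (-1)*hn2' + (3)*hr2'
      | linear_combination (-(b:ℂ)^2)*Complex.I_sq + (0)*hn1' + (0)*hn2' + (-3)*hr2'
      | linear_combination (-(b:ℂ)^2)*Complex.I_sq + (0)*hn1' + (0)*hn2' + (-2)*hr2'
      | linear_combination (-(b:ℂ)^2)*Complex.I_sq + (0)*hn1' + (0)*hn2' + (-1)*hr2'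
      | linear_combination (-(b:ℂ)^2)*Complex.I_sq + (0)*hn1' + (0)*hn2' + (0)*hr2'
      | linear_combination (-(b:ℂ)^2)*Complex.I_sq + (0)*hn1' + (0)*hn2' + (1)*hr2'
      | linear_combination (-(b:ℂ)^2)*Complex.I_sq + (0)*hn1' + (0)*hn2' + (2)*hr2'
      | linear_combination (-(b:ℂ)^2)*Complex.I_sq + (0)*hn1' + (0)*hn2' + (3)*hr2'
      | linear_combination (-(b:ℂ)^2)*Complex.I_sq + (0)*hn1' + (1)*hn2' + (-3)*hr2'
      | linear_combination (-(b:ℂ)^2)*Complex.I_sq + (0)*hn1' + (1)*hn2' + (-2)*hr2'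
      | linear_combination (-(b:ℂ)^2)*Complex.I_sq + (0)*hn1' + (1)*hn2' + (-1)*hr2'
      | linear_combination (-(b:ℂ)^2)*Complex.I_sq + (0)*hn1' + (1)*hn2' + (0)*hr2'
      | linear_combination (-(b:ℂ)^2)*Complex.I_sq + (0)*hn1' + (1)*hn2' + (1)*hr2'
      | linear_combination (-(b:ℂ)^2)*Complex.I_sq + (0)*hn1' + (1)*hn2' + (2)*hr2'
      | linear_combination (-(b:ℂ)^2)*Complex.I_sq + (0)*hn1' + (1)*hn2' + (3)*hr2'
      | linear_combination (-(b:ℂ)^2)*Complex.I_sq + (1)*hn1' + (-1)*hn2' + (-3)*hr2'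
      | linear_combination (-(b:ℂ)^2)*Complex.I_sq + (1)*hn1' + (-1)*hn2' + (-2)*hr2'
      | linear_combination (-(b:ℂ)^2)*Complex.I_sq + (1)*hn1' + (-1)*hn2' + (-1)*hr2'
      | linear_combination (-(b:ℂ)^2)*Complex.I_sq + (1)*hn1' + (-1)*hn2' + (0)*hr2'
      | linear_combination (-(b:ℂ)^2)*Complex.I_sq + (1)*hn1' + (-1)*hn2' + (1)*hr2'
      | linear_combination (-(b:ℂ)^2)*Complex.I_sq + (1)*hn1' + (-1)*hn2' + (2)*hr2'
      | linear_combination (-(b:ℂ)^2)*Complex.I_sq + (1)*hn1' + (-1)*hn2' + (3)*hr2'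
      | linear_combination (-(b:ℂ)^2)*Complex.I_sq + (1)*hn1' + (0)*hn2' + (-3)*hr2'
      | linear_combination (-(b:ℂ)^2)*Complex.I_sq + (1)*hn1' + (0)*hn2' + (-2)*hr2'
      | linear_combination (-(b:ℂ)^2)*Complex.I_sq + (1)*hn1' + (0)*hn2' + (-1)*hr2'
      | linear_combination (-(b:ℂ)^2)*Complex.I_sq + (1)*hn1' + (0)*hn2' + (0)*hr2'
      | linear_combination (-(b:ℂ)^2)*Complex.I_sq + (1)*hn1' + (0)*hn2' + (1)*hr2'
      | linear_combination (-(b:ℂ)^2)*Complex.I_sq + (1)*hn1' + (0)*hn2' + (2)*hr2'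
      | linear_combination (-(b:ℂ)^2)*Complex.I_sq + (1)*hn1' + (0)*hn2' + (3)*hr2'
      | linear_combination (-(b:ℂ)^2)*Complex.I_sq + (1)*hn1' + (1)*hn2' + (-3)*hr2'
      | linear_combination (-(b:ℂ)^2)*Complex.I_sq + (1)*hn1' + (1)*hn2' + (-2)*hr2'
      | linear_combination (-(b:ℂ)^2)*Complex.I_sq + (1)*hn1' + (1)*hn2' + (-1)*hr2'
      | linear_combination (-(b:ℂ)^2)*Complex.I_sq + (1)*hn1' + (1)*hn2' + (0)*hr2'
      | linear_combination (-(b:ℂ)^2)*Complex.I_sq + (1)*hn1' + (1)*hn2' + (1)*hr2'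
      | linear_combination (-(b:ℂ)^2)*Complex.I_sq + (1)*hn1' + (1)*hn2' + (2)*hr2'
      | linear_combination (-(b:ℂ)^2)*Complex.I_sq + (1)*hn1' + (1)*hn2' + (3)*hr2'
      | linear_combination ((b:ℂ)^2)*Complex.I_sq + (-1)*hn1' + (-1)*hn2' + (-3)*hr2'
      | linear_combination ((b:ℂ)^2)*Complex.I_sq + (-1)*hn1' + (-1)*hn2' + (-2)*hr2'
      | linear_combination ((b:ℂ)^2)*Complex.I_sq + (-1)*hn1' + (-1)*hn2' + (-1)*hr2'
      | linear_combination ((b:ℂ)^2)*Complex.I_sq + (-1)*hn1' + (-1)*hn2' + (0)*hr2'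
      | linear_combination ((b:ℂ)^2)*Complex.I_sq + (-1)*hn1' + (-1)*hn2' + (1)*hr2'
      | linear_combination ((b:ℂ)^2)*Complex.I_sq + (-1)*hn1' + (-1)*hn2' + (2)*hr2'
      | linear_combination ((b:ℂ)^2)*Complex.I_sq + (-1)*hn1' + (-1)*hn2' + (3)*hr2'
      | linear_combination ((b:ℂ)^2)*Complex.I_sq + (-1)*hn1' + (0)*hn2' + (-3)*hr2'
      | linear_combination ((b:ℂ)^2)*Complex.I_sq + (-1)*hn1' + (0)*hn2' + (-2)*hr2'
      | linear_combination ((b:ℂ)^2)*Complex.I_sq + (-1)*hn1' + (0)*hn2' + (-1)*hr2'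
      | linear_combination ((b:ℂ)^2)*Complex.I_sq + (-1)*hn1' + (0)*hn2' + (0)*hr2'
      | linear_combination ((b:ℂ)^2)*Complex.I_sq + (-1)*hn1' + (0)*hn2' + (1)*hr2'
      | linear_combination ((b:ℂ)^2)*Complex.I_sq + (-1)*hn1' + (0)*hn2' + (2)*hr2'
      | linear_combination ((b:ℂ)^2)*Complex.I_sq + (-1)*hn1' + (0)*hn2' + (3)*hr2'
      | linear_combination ((b:ℂ)^2)*Complex.I_sq + (-1)*hn1' + (1)*hn2' + (-3)*hr2'
      | linear_combination ((b:ℂ)^2)*Complex.I_sq + (-1)*hn1' + (1)*hn2' + (-2)*hr2'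
      | linear_combination ((b:ℂ)^2)*Complex.I_sq + (-1)*hn1' + (1)*hn2' + (-1)*hr2'
      | linear_combination ((b:ℂ)^2)*Complex.I_sq + (-1)*hn1' + (1)*hn2' + (0)*hr2'
      | linear_combination ((b:ℂ)^2)*Complex.I_sq + (-1)*hn1' + (1)*hn2' + (1)*hr2'
      | linear_combination ((b:ℂ)^2)*Complex.I_sq + (-1)*hn1' + (1)*hn2' + (2)*hr2'
      | linear_combination ((b:ℂ)^2)*Complex.I_sq + (-1)*hn1' + (1)*hn2' + (3)*hr2'
      | linear_combination ((b:ℂ)^2)*Complex.I_sq + (0)*hn1' + (-1)*hn2' + (-3)*hr2'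
      | linear_combination ((b:ℂ)^2)*Complex.I_sq + (0)*hn1' + (-1)*hn2' + (-2)*hr2'
      | linear_combination ((b:ℂ)^2)*Complex.I_sq + (0)*hn1' + (-1)*hn2' + (-1)*hr2'
      | linear_combination ((b:ℂ)^2)*Complex.I_sq + (0)*hn1' + (-1)*hn2' + (0)*hr2'
      | linear_combination ((b:ℂ)^2)*Complex.I_sq + (0)*hn1' + (-1)*hn2' + (1)*hr2'
      | linear_combination ((b:ℂ)^2)*Complex.I_sq + (0)*hn1' + (-1)*hn2' + (2)*hr2'
      | linear_combination ((b:ℂ)^2)*Complex.I_sq + (0)*hn1' + (-1)*hn2' + (3)*hr2'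
      | linear_combination ((b:ℂ)^2)*Complex.I_sq + (0)*hn1' + (0)*hn2' + (-3)*hr2'
      | linear_combination ((b:ℂ)^2)*Complex.I_sq + (0)*hn1' + (0)*hn2' + (-2)*hr2'
      | linear_combination ((b:ℂ)^2)*Complex.I_sq + (0)*hn1' + (0)*hn2' + (-1)*hr2'
      | linear_combination ((b:ℂ)^2)*Complex.I_sq + (0)*hn1' + (0)*hn2' + (0)*hr2'
      | linear_combination ((b:ℂ)^2)*Complex.I_sq + (0)*hn1' + (0)*hn2' + (1)*hr2'
      | linear_combination ((b:ℂ)^2)*Complex.I_sq + (0)*hn1' + (0)*hn2' + (2)*hr2'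
      | linear_combination ((b:ℂ)^2)*Complex.I_sq + (0)*hn1' + (0)*hn2' + (3)*hr2'
      | linear_combination ((b:ℂ)^2)*Complex.I_sq + (0)*hn1' + (1)*hn2' + (-3)*hr2'
      | linear_combination ((b:ℂ)^2)*Complex.I_sq + (0)*hn1' + (1)*hn2' + (-2)*hr2'
      | linear_combination ((b:ℂ)^2)*Complex.I_sq + (0)*hn1' + (1)*hn2' + (-1)*hr2'
      | linear_combination ((b:ℂ)^2)*Complex.I_sq + (0)*hn1' + (1)*hn2' + (0)*hr2'
      | linear_combination ((b:ℂ)^2)*Complex.I_sq + (0)*hn1' + (1)*hn2' + (1)*hr2'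
      | linear_combination ((b:ℂ)^2)*Complex.I_sq + (0)*hn1' + (1)*hn2' + (2)*hr2'
      | linear_combination ((b:ℂ)^2)*Complex.I_sq + (0)*hn1' + (1)*hn2' + (3)*hr2'
      | linear_combination ((b:ℂ)^2)*Complex.I_sq + (1)*hn1' + (-1)*hn2' + (-3)*hr2'
      | linear_combination ((b:ℂ)^2)*Complex.I_sq + (1)*hn1' + (-1)*hn2' + (-2)*hr2'
      | linear_combination ((b:ℂ)^2)*Complex.I_sq + (1)*hn1' + (-1)*hn2' + (-1)*hr2'
      | linear_combination ((b:ℂ)^2)*Complex.I_sq + (1)*hn1' + (-1)*hn2' + (0)*hr2'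
      | linear_combination ((b:ℂ)^2)*Complex.I_sq + (1)*hn1' + (-1)*hn2' + (1)*hr2'
      | linear_combination ((b:ℂ)^2)*Complex.I_sq + (1)*hn1' + (-1)*hn2' + (2)*hr2'
      | linear_combination ((b:ℂ)^2)*Complex.I_sq + (1)*hn1' + (-1)*hn2' + (3)*hr2'
      | linear_combination ((b:ℂ)^2)*Complex.I_sq + (1)*hn1' + (0)*hn2' + (-3)*hr2'
      | linear_combination ((b:ℂ)^2)*Complex.I_sq + (1)*hn1' + (0)*hn2' + (-2)*hr2'
      | linear_combination ((b:ℂ)^2)*Complex.I_sq + (1)*hn1' + (0)*hn2' + (-1)*hr2'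
      | linear_combination ((b:ℂ)^2)*Complex.I_sq + (1)*hn1' + (0)*hn2' + (0)*hr2'
      | linear_combination ((b:ℂ)^2)*Complex.I_sq + (1)*hn1' + (0)*hn2' + (1)*hr2'
      | linear_combination ((b:ℂ)^2)*Complex.I_sq + (1)*hn1' + (0)*hn2' + (2)*hr2'
      | linear_combination ((b:ℂ)^2)*Complex.I_sq + (1)*hn1' + (0)*hn2' + (3)*hr2'
      | linear_combination ((b:ℂ)^2)*Complex.I_sq + (1)*hn1' + (1)*hn2' + (-3)*hr2'
      | linear_combination ((b:ℂ)^2)*Complex.I_sq + (1)*hn1' + (1)*hn2' + (-2)*hr2'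
      | linear_combination ((b:ℂ)^2)*Complex.I_sq + (1)*hn1' + (1)*hn2' + (-1)*hr2'
      | linear_combination ((b:ℂ)^2)*Complex.I_sq + (1)*hn1' + (1)*hn2' + (0)*hr2'
      | linear_combination ((b:ℂ)^2)*Complex.I_sq + (1)*hn1' + (1)*hn2' + (1)*hr2'
      | linear_combination ((b:ℂ)^2)*Complex.I_sq + (1)*hn1' + (1)*hn2' + (2)*hr2'
      | linear_combination ((b:ℂ)^2)*Complex.I_sq + (1)*hn1' + (1)*hn2' + (3)*hr2'
      | linear_combination (0)*Complex.I_sq + (-1)*hn1' + (-1)*hn2' + (-3)*hr2'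
      | linear_combination (0)*Complex.I_sq + (-1)*hn1' + (-1)*hn2' + (-2)*hr2'
      | linear_combination (0)*Complex.I_sq + (-1)*hn1' + (-1)*hn2' + (-1)*hr2'
      | linear_combination (0)*Complex.I_sq + (-1)*hn1' + (-1)*hn2' + (0)*hr2'
      | linear_combination (0)*Complex.I_sq + (-1)*hn1' + (-1)*hn2' + (1)*hr2'
      | linear_combination (0)*Complex.I_sq + (-1)*hn1' + (-1)*hn2' + (2)*hr2'
      | linear_combination (0)*Complex.I_sq + (-1)*hn1' + (-1)*hn2' + (3)*hr2'
      | linear_combination (0)*Complex.I_sq + (-1)*hn1' + (0)*hn2' + (-3)*hr2'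
      | linear_combination (0)*Complex.I_sq + (-1)*hn1' + (0)*hn2' + (-2)*hr2'
      | linear_combination (0)*Complex.I_sq + (-1)*hn1' + (0)*hn2' + (-1)*hr2'
      | linear_combination (0)*Complex.I_sq + (-1)*hn1' + (0)*hn2' + (0)*hr2'
      | linear_combination (0)*Complex.I_sq + (-1)*hn1' + (0)*hn2' + (1)*hr2'
      | linear_combination (0)*Complex.I_sq + (-1)*hn1' + (0)*hn2' + (2)*hr2'
      | linear_combination (0)*Complex.I_sq + (-1)*hn1' + (0)*hn2' + (3)*hr2'
      | linear_combination (0)*Complex.I_sq + (-1)*hn1' + (1)*hn2' + (-3)*hr2'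
      | linear_combination (0)*Complex.I_sq + (-1)*hn1' + (1)*hn2' + (-2)*hr2'
      | linear_combination (0)*Complex.I_sq + (-1)*hn1' + (1)*hn2' + (-1)*hr2'
      | linear_combination (0)*Complex.I_sq + (-1)*hn1' + (1)*hn2' + (0)*hr2'
      | linear_combination (0)*Complex.I_sq + (-1)*hn1' + (1)*hn2' + (1)*hr2'
      | linear_combination (0)*Complex.I_sq + (-1)*hn1' + (1)*hn2' + (2)*hr2'
      | linear_combination (0)*Complex.I_sq + (-1)*hn1' + (1)*hn2' + (3)*hr2'
      | linear_combination (0)*Complex.I_sq + (0)*hn1' + (-1)*hn2' + (-3)*hr2'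
      | linear_combination (0)*Complex.I_sq + (0)*hn1' + (-1)*hn2' + (-2)*hr2'
      | linear_combination (0)*Complex.I_sq + (0)*hn1' + (-1)*hn2' + (-1)*hr2'
      | linear_combination (0)*Complex.I_sq + (0)*hn1' + (-1)*hn2' + (0)*hr2'
      | linear_combination (0)*Complex.I_sq + (0)*hn1' + (-1)*hn2' + (1)*hr2'
      | linear_combination (0)*Complex.I_sq + (0)*hn1' + (-1)*hn2' + (2)*hr2'
      | linear_combination (0)*Complex.I_sq + (0)*hn1' + (-1)*hn2' + (3)*hr2'
      | linear_combination (0)*Complex.I_sq + (0)*hn1' + (0)*hn2' + (-3)*hr2'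
      | linear_combination (0)*Complex.I_sq + (0)*hn1' + (0)*hn2' + (-2)*hr2'
      | linear_combination (0)*Complex.I_sq + (0)*hn1' + (0)*hn2' + (-1)*hr2'
      | linear_combination (0)*Complex.I_sq + (0)*hn1' + (0)*hn2' + (0)*hr2'
      | linear_combination (0)*Complex.I_sq + (0)*hn1' + (0)*hn2' + (1)*hr2'
      | linear_combination (0)*Complex.I_sq + (0)*hn1' + (0)*hn2' + (2)*hr2'
      | linear_combination (0)*Complex.I_sq + (0)*hn1' + (0)*hn2' + (3)*hr2'
      | linear_combination (0)*Complex.I_sq + (0)*hn1' + (1)*hn2' + (-3)*hr2'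
      | linear_combination (0)*Complex.I_sq + (0)*hn1' + (1)*hn2' + (-2)*hr2'
      | linear_combination (0)*Complex.I_sq + (0)*hn1' + (1)*hn2' + (-1)*hr2'
      | linear_combination (0)*Complex.I_sq + (0)*hn1' + (1)*hn2' + (0)*hr2'
      | linear_combination (0)*Complex.I_sq + (0)*hn1' + (1)*hn2' + (1)*hr2'
      | linear_combination (0)*Complex.I_sq + (0)*hn1' + (1)*hn2' + (2)*hr2'
      | linear_combination (0)*Complex.I_sq + (0)*hn1' + (1)*hn2' + (3)*hr2'
      | linear_combination (0)*Complex.I_sq + (1)*hn1' + (-1)*hn2' + (-3)*hr2'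
      | linear_combination (0)*Complex.I_sq + (1)*hn1' + (-1)*hn2' + (-2)*hr2'
      | linear_combination (0)*Complex.I_sq + (1)*hn1' + (-1)*hn2' + (-1)*hr2'
      | linear_combination (0)*Complex.I_sq + (1)*hn1' + (-1)*hn2' + (0)*hr2'
      | linear_combination (0)*Complex.I_sq + (1)*hn1' + (-1)*hn2' + (1)*hr2'
      | linear_combination (0)*Complex.I_sq + (1)*hn1' + (-1)*hn2' + (2)*hr2'
      | linear_combination (0)*Complex.I_sq + (1)*hn1' + (-1)*hn2' + (3)*hr2'
      | linear_combination (0)*Complex.I_sq + (1)*hn1' + (0)*hn2' + (-3)*hr2'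
      | linear_combination (0)*Complex.I_sq + (1)*hn1' + (0)*hn2' + (-2)*hr2'
      | linear_combination (0)*Complex.I_sq + (1)*hn1' + (0)*hn2' + (-1)*hr2'
      | linear_combination (0)*Complex.I_sq + (1)*hn1' + (0)*hn2' + (0)*hr2'
      | linear_combination (0)*Complex.I_sq + (1)*hn1' + (0)*hn2' + (1)*hr2'
      | linear_combination (0)*Complex.I_sq + (1)*hn1' + (0)*hn2' + (2)*hr2'
      | linear_combination (0)*Complex.I_sq + (1)*hn1' + (0)*hn2' + (3)*hr2'
      | linear_combination (0)*Complex.I_sq + (1)*hn1' + (1)*hn2' + (-3)*hr2'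
      | linear_combination (0)*Complex.I_sq + (1)*hn1' + (1)*hn2' + (-2)*hr2'
      | linear_combination (0)*Complex.I_sq + (1)*hn1' + (1)*hn2' + (-1)*hr2'
      | linear_combination (0)*Complex.I_sq + (1)*hn1' + (1)*hn2' + (0)*hr2'
      | linear_combination (0)*Complex.I_sq + (1)*hn1' + (1)*hn2' + (1)*hr2'
      | linear_combination (0)*Complex.I_sq + (1)*hn1' + (1)*hn2' + (2)*hr2'
      | linear_combination (0)*Complex.I_sq + (1)*hn1' + (1)*hn2' + (3)*hr2'

lemma Ud_mul (hr2 : r^2 = a^2+b^2+c^2) (hn1p : 0 < n1) (hn2p : 0 < n2)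
    (s : ℝ) (w : Fin 3 → ℝ) (hw0 : w 0 = s*a) (hw1 : w 1 = s*b) (hw2 : w 2 = s*c) :
    bloch w * Ud a b c r n1 n2 =
      Ud a b c r n1 n2 * !![(((1+s*r)/2 : ℝ):ℂ), 0; 0, (((1-s*r)/2 : ℝ):ℂ)] := by
  have h1 : (n1:ℂ) ≠ 0 := by exact_mod_cast hn1p.ne'
  have h2 : (n2:ℂ) ≠ 0 := by exact_mod_cast hn2p.ne'
  have hr2' : (r:ℂ)^2 = (a:ℂ)^2+(b:ℂ)^2+(c:ℂ)^2 := by exact_mod_cast hr2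
  ext i j
  fin_cases i <;> fin_cases j <;>
    · simp [Ud, bloch_eq, Matrix.mul_apply, Fin.sum_univ_two, hw0, hw1, hw2]
      push_cast
      field_simp
      ring_nf
      all_goals first
      | rfl
      | linear_combination (s:ℂ)*hr2'
      | linear_combination -(s:ℂ)*hr2'
      | linear_combination ((s:ℂ)*(b:ℂ)^2)*Complex.I_sq + (s:ℂ)*hr2'
      | linear_combination (-(s:ℂ)*(b:ℂ)^2)*Complex.I_sq + (s:ℂ)*hr2'
      | linear_combination ((s:ℂ)*(b:ℂ)^2)*Complex.I_sq - (s:ℂ)*hr2'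
      | linear_combination (-(s:ℂ)*(b:ℂ)^2)*Complex.I_sq - (s:ℂ)*hr2'
      | linear_combination (-(s:ℂ)*(b:ℂ)^2*(n1:ℂ)*2)*Complex.I_sq - 2*(s:ℂ)*(n1:ℂ)*hr2'
      | linear_combination ((s:ℂ)*(b:ℂ)^2*(n1:ℂ)*2)*Complex.I_sq - 2*(s:ℂ)*(n1:ℂ)*hr2'
      | linear_combination (-(s:ℂ)*(b:ℂ)^2*(n1:ℂ)*2)*Complex.I_sq + 2*(s:ℂ)*(n1:ℂ)*hr2'
      | linear_combination ((s:ℂ)*(b:ℂ)^2*(n1:ℂ)*2)*Complex.I_sq + 2*(s:ℂ)*(n1:ℂ)*hr2'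
      | linear_combination (-(s:ℂ)*(b:ℂ)^2*(n2:ℂ)*2)*Complex.I_sq - 2*(s:ℂ)*(n2:ℂ)*hr2'
      | linear_combination ((s:ℂ)*(b:ℂ)^2*(n2:ℂ)*2)*Complex.I_sq - 2*(s:ℂ)*(n2:ℂ)*hr2'
      | linear_combination (-(s:ℂ)*(b:ℂ)^2*(n2:ℂ)*2)*Complex.I_sq + 2*(s:ℂ)*(n2:ℂ)*hr2'
      | linear_combination ((s:ℂ)*(b:ℂ)^2*(n2:ℂ)*2)*Complex.I_sq + 2*(s:ℂ)*(n2:ℂ)*hr2'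
end

lemma endgame (u v : Fin 3 → ℝ) (d0 d1 e0 e1 : ℝ)
    (hsum_d : d0 + d1 = 1) (hsum_e : e0 + e1 = 1)
    (hprod_d : d0*d1 = (1 - (u 0^2+u 1^2+u 2^2))/4)
    (hprod_e : e0*e1 = (1 - (v 0^2+v 1^2+v 2^2))/4)
    (hmix : d0*e0 + d1*e1 = (1 + (u 0*v 0+u 1*v 1+u 2*v 2))/2)
    (h01 : u 0 * v 1 = u 1 * v 0) (h02 : u 0 * v 2 = u 2 * v 0) (h12 : u 1 * v 2 = u 2 * v 1)
    (hd : d1 ≤ d0) (he : e1 ≤ e0) (hcr : d0 * e1 ≤ d1 * e0) :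
    ∃ t : ℝ, 0 ≤ t ∧ t ≤ 1 ∧ u = t • v := by
  by_cases hv : v 0 = 0 ∧ v 1 = 0 ∧ v 2 = 0
  · obtain ⟨hv0, hv1, hv2⟩ := hv
    rw [hv0, hv1, hv2] at hprod_e hmix
    have he0 : e0 = 1/2 := by nlinarith [sq_nonneg (e0 - e1)]
    have he1 : e1 = 1/2 := by linarith
    have hd01 : d0 = d1 := by rw [he0, he1] at hcr; linarith
    have hU0 : u 0^2 + u 1^2 + u 2^2 = 0 := by nlinarith
    have hu0 : u 0 = 0 := by nlinarith [sq_nonneg (u 0), sq_nonneg (u 1), sq_nonneg (u 2)]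
    have hu1 : u 1 = 0 := by nlinarith [sq_nonneg (u 0), sq_nonneg (u 1), sq_nonneg (u 2)]
    have hu2 : u 2 = 0 := by nlinarith [sq_nonneg (u 0), sq_nonneg (u 1), sq_nonneg (u 2)]
    refine ⟨0, le_refl _, by norm_num, ?_⟩
    funext i; fin_cases i <;> simp [hu0, hu1, hu2]
  · have hvne : v 0 ≠ 0 ∨ v 1 ≠ 0 ∨ v 2 ≠ 0 := by tauto
    have hR : 0 < v 0^2 + v 1^2 + v 2^2 := by
      rcases hvne with h|h|h <;> positivity
    set R := v 0^2 + v 1^2 + v 2^2 with hRdef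
    set s : ℝ := (u 0*v 0 + u 1*v 1 + u 2*v 2)/R with hsdef
    have hu_0 : u 0 = s * v 0 := by
      rw [hsdef]; field_simp
      linear_combination (v 1) * h01 + (v 2) * h02
    have hu_1 : u 1 = s * v 1 := by
      rw [hsdef]; field_simp
      linear_combination (-(v 0)) * h01 + (v 2) * h12
    have hu_2 : u 2 = s * v 2 := by
      rw [hsdef]; field_simp
      linear_combination (-(v 0)) * h02 + (-(v 1)) * h12
    have hUU : u 0^2 + u 1^2 + u 2^2 = s^2 * R := by
      rw [hu_0, hu_1, hu_2, hRdef]; ring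
    have hUV : u 0*v 0 + u 1*v 1 + u 2*v 2 = s * R := by
      rw [hu_0, hu_1, hu_2, hRdef]; ring
    have hδ : 0 ≤ d0 - d1 := by linarith
    have hε : 0 ≤ e0 - e1 := by linarith
    have hδ2 : (d0 - d1)^2 = s^2 * R := by
      linear_combination (d0 + d1 + 1) * hsum_d - 4 * hprod_d + hUU
    have hε2 : (e0 - e1)^2 = R := by
      linear_combination (e0 + e1 + 1) * hsum_e - 4 * hprod_e
    have hδε : s * R = (d0 - d1) * (e0 - e1) := by
      linear_combination -2*hmix - hUV + (e0 + e1)*hsum_d + hsum_e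
    have hδle : d0 - d1 ≤ e0 - e1 := by nlinarith
    have hs0 : 0 ≤ s := by nlinarith [mul_nonneg hδ hε]
    have hs1 : s ≤ 1 := by
      have h1 : (d0 - d1)*(d0 - d1) ≤ (d0 - d1)*(e0 - e1) := by nlinarith
      nlinarith
    exact ⟨s, hs0, hs1, funext fun i => by fin_cases i <;> simpa [hu_0, hu_1, hu_2]⟩

lemma bloch_herm (u : Fin 3 → ℝ) : (bloch u)ᴴ = bloch u := by
  ext i j
  fin_cases i <;> fin_cases j <;>
    simp [bloch_eq, Matrix.conjTranspose_apply, Complex.ext_iff]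

lemma isDiag_mul_comm {D E : Matrix (Fin 2) (Fin 2) ℂ} (hD : D.IsDiag) (hE : E.IsDiag) :
    D * E = E * D := by
  have hD01 : D 0 1 = 0 := hD (by decide)
  have hD10 : D 1 0 = 0 := hD (by decide)
  have hE01 : E 0 1 = 0 := hE (by decide)
  have hE10 : E 1 0 = 0 := hE (by decide)
  ext i j
  fin_cases i <;> fin_cases j <;>
    simp [Matrix.mul_apply, Fin.sum_univ_two, hD01, hD10, hE01, hE10] <;> ring

lemma trace_bloch (u : Fin 3 → ℝ) : Matrix.trace (bloch u) = 1 := by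
  rw [bloch_eq, Matrix.trace_fin_two_of]
  ring

lemma det_bloch (u : Fin 3 → ℝ) :
    (bloch u).det = (((1 - (u 0^2 + u 1^2 + u 2^2))/4 : ℝ) : ℂ) := by
  rw [bloch_eq, Matrix.det_fin_two_of]
  push_cast
  first
  | linear_combination ((u 1 : ℂ)^2/4) * Complex.I_sq
  | linear_combination (-(u 1 : ℂ)^2/4) * Complex.I_sq

lemma trace_bloch_mul (u v : Fin 3 → ℝ) :
    Matrix.trace (bloch u * bloch v) =
      (((1 + (u 0*v 0 + u 1*v 1 + u 2*v 2))/2 : ℝ) : ℂ) := by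
  rw [bloch_eq u, bloch_eq v, Matrix.trace_fin_two]
  simp [Matrix.mul_apply, Fin.sum_univ_two]
  push_cast
  first
  | linear_combination (-(u 1 : ℂ)*(v 1 : ℂ)/2) * Complex.I_sq
  | linear_combination ((u 1 : ℂ)*(v 1 : ℂ)/2) * Complex.I_sq
  | skip

lemma bloch_cross (u v : Fin 3 → ℝ) (h : bloch u * bloch v = bloch v * bloch u) :
    u 0 * v 1 = u 1 * v 0 ∧ u 0 * v 2 = u 2 * v 0 ∧ u 1 * v 2 = u 2 * v 1 := by
  rw [bloch_eq u, bloch_eq v] at h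
  have h00 := congrFun (congrFun h 0) 0
  have h01 := congrFun (congrFun h 0) 1
  simp only [Matrix.mul_apply, Fin.sum_univ_two] at h00 h01
  norm_num [Complex.ext_iff] at h00 h01
  obtain ⟨h00re, h00im⟩ := h00
  obtain ⟨h01re, h01im⟩ := h01
  refine ⟨by nlinarith, by nlinarith, by nlinarith⟩
/-- On Ω², the spectral order is: ρ ⊑ σ iff the Bloch vector of ρ lies on the
line segment from the origin to the Bloch vector of σ. -/
theorem spectral_order_bloch_ball (u v : Fin 3 → ℝ)
    (hu : (u 0) ^ 2 + (u 1) ^ 2 + (u 2) ^ 2 ≤ 1)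
    (hv : (v 0) ^ 2 + (v 1) ^ 2 + (v 2) ^ 2 ≤ 1) :
    specLE (bloch u) (bloch v) ↔ ∃ t : ℝ, 0 ≤ t ∧ t ≤ 1 ∧ u = t • v := by
  constructor
  · rintro ⟨U, hU, hDd, hEd, hB⟩
    have hU1 : U * Uᴴ = 1 := by
      simpa [Matrix.star_eq_conjTranspose] using Matrix.mem_unitaryGroup_iff.mp hU
    have hU2 : Uᴴ * U = 1 := by
      simpa [Matrix.star_eq_conjTranspose] using Matrix.mem_unitaryGroup_iff'.mp hU
    set D := Uᴴ * bloch u * U with hDdef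
    set E := Uᴴ * bloch v * U with hEdef
    have conj_mul : ∀ A B : Matrix (Fin 2) (Fin 2) ℂ,
        (Uᴴ * A * U) * (Uᴴ * B * U) = Uᴴ * (A * B) * U := by
      intro A B
      calc (Uᴴ * A * U) * (Uᴴ * B * U) = Uᴴ * (A * ((U * Uᴴ) * (B * U))) := by
            simp only [Matrix.mul_assoc]
        _ = Uᴴ * (A * B) * U := by
            rw [hU1, Matrix.one_mul, Matrix.mul_assoc, Matrix.mul_assoc]
    have unconj : ∀ X : Matrix (Fin 2) (Fin 2) ℂ, U * (Uᴴ * X * U) * Uᴴ = X := by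
      intro X
      calc U * (Uᴴ * X * U) * Uᴴ = (U * Uᴴ) * X * (U * Uᴴ) := by simp only [Matrix.mul_assoc]
        _ = X := by rw [hU1, Matrix.one_mul, Matrix.mul_one]
    have hcomm : bloch u * bloch v = bloch v * bloch u := by
      have h1 : Uᴴ * (bloch u * bloch v) * U = Uᴴ * (bloch v * bloch u) * U := by
        rw [← conj_mul, ← conj_mul, ← hDdef, ← hEdef, isDiag_mul_comm hDd hEd]
      have h2 := congrArg (fun M => U * M * Uᴴ) h1
      simpa only [unconj] using h2
    have hD01 : D 0 1 = 0 := hDd (by decide)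
    have hD10 : D 1 0 = 0 := hDd (by decide)
    have hE01 : E 0 1 = 0 := hEd (by decide)
    have hE10 : E 1 0 = 0 := hEd (by decide)
    have htrD : D 0 0 + D 1 1 = 1 := by
      have t1 : Matrix.trace D = 1 := by
        rw [hDdef, Matrix.trace_mul_cycle, hU1, Matrix.one_mul, trace_bloch]
      rwa [Matrix.trace_fin_two] at t1
    have htrE : E 0 0 + E 1 1 = 1 := by
      have t1 : Matrix.trace E = 1 := by
        rw [hEdef, Matrix.trace_mul_cycle, hU1, Matrix.one_mul, trace_bloch]
      rwa [Matrix.trace_fin_two] at t1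
    have hdetU : Uᴴ.det * U.det = 1 := by rw [← Matrix.det_mul, hU2, Matrix.det_one]
    have hdetD : D 0 0 * D 1 1 = (((1 - (u 0^2+u 1^2+u 2^2))/4 : ℝ) : ℂ) := by
      have t1 : D.det = (bloch u).det := by
        rw [hDdef, Matrix.det_mul, Matrix.det_mul]
        linear_combination (bloch u).det * hdetU
      rw [Matrix.det_fin_two, hD01, det_bloch] at t1
      linear_combination t1
    have hdetE : E 0 0 * E 1 1 = (((1 - (v 0^2+v 1^2+v 2^2))/4 : ℝ) : ℂ) := by
      have t1 : E.det = (bloch v).det := by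
        rw [hEdef, Matrix.det_mul, Matrix.det_mul]
        linear_combination (bloch v).det * hdetU
      rw [Matrix.det_fin_two, hE01, det_bloch] at t1
      linear_combination t1
    have hmixc : D 0 0 * E 0 0 + D 1 1 * E 1 1
        = (((1 + (u 0*v 0+u 1*v 1+u 2*v 2))/2 : ℝ) : ℂ) := by
      have t1 : Matrix.trace (D * E) = Matrix.trace (bloch u * bloch v) := by
        rw [hDdef, hEdef, conj_mul, Matrix.trace_mul_cycle, ← Matrix.mul_assoc, hU1,
          Matrix.one_mul]
      rw [trace_bloch_mul, Matrix.trace_fin_two] at t1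
      simp only [Matrix.mul_apply, Fin.sum_univ_two, hD01, hD10, zero_mul, mul_zero,
        add_zero, zero_add] at t1
      linear_combination t1
    have hDH : Dᴴ = D := by
      rw [hDdef]
      simp [Matrix.conjTranspose_mul, Matrix.mul_assoc, bloch_herm]
    have hEH : Eᴴ = E := by
      rw [hEdef]
      simp [Matrix.conjTranspose_mul, Matrix.mul_assoc, bloch_herm]
    have himD0 : (D 0 0).im = 0 := by
      have h := congrArg Complex.im (congrFun (congrFun hDH 0) 0)
      rw [Matrix.conjTranspose_apply] at h
      simp at h; linarith
    have himD1 : (D 1 1).im = 0 := by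
      have h := congrArg Complex.im (congrFun (congrFun hDH 1) 1)
      rw [Matrix.conjTranspose_apply] at h
      simp at h; linarith
    have himE0 : (E 0 0).im = 0 := by
      have h := congrArg Complex.im (congrFun (congrFun hEH 0) 0)
      rw [Matrix.conjTranspose_apply] at h
      simp at h; linarith
    have himE1 : (E 1 1).im = 0 := by
      have h := congrArg Complex.im (congrFun (congrFun hEH 1) 1)
      rw [Matrix.conjTranspose_apply] at h
      simp at h; linarith
    have hcD0 : D 0 0 = (((D 0 0).re : ℝ) : ℂ) := by
      apply Complex.ext <;> simp [himD0]
    have hcD1 : D 1 1 = (((D 1 1).re : ℝ) : ℂ) := by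
      apply Complex.ext <;> simp [himD1]
    have hcE0 : E 0 0 = (((E 0 0).re : ℝ) : ℂ) := by
      apply Complex.ext <;> simp [himE0]
    have hcE1 : E 1 1 = (((E 1 1).re : ℝ) : ℂ) := by
      apply Complex.ext <;> simp [himE1]
    rw [hcD0, hcD1] at htrD hdetD
    rw [hcE0, hcE1] at htrE hdetE
    rw [hcD0, hcD1, hcE0, hcE1] at hmixc
    have rsum : (D 0 0).re + (D 1 1).re = 1 := by exact_mod_cast htrD
    have esum : (E 0 0).re + (E 1 1).re = 1 := by exact_mod_cast htrE
    have rprod : (D 0 0).re * (D 1 1).re = (1 - (u 0^2+u 1^2+u 2^2))/4 := by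
      exact_mod_cast hdetD
    have eprod : (E 0 0).re * (E 1 1).re = (1 - (v 0^2+v 1^2+v 2^2))/4 := by
      exact_mod_cast hdetE
    have rmix : (D 0 0).re * (E 0 0).re + (D 1 1).re * (E 1 1).re
        = (1 + (u 0*v 0+u 1*v 1+u 2*v 2))/2 := by exact_mod_cast hmixc
    obtain ⟨h01, h02, h12⟩ := bloch_cross u v hcomm
    obtain ⟨π, hxa, hya, hcr⟩ := hB
    have hmono := hxa (show (0:Fin 2) ≤ 1 by decide)
    have hmony := hya (show (0:Fin 2) ≤ 1 by decide)
    have hcr01 := hcr 0 1 (by decide)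
    have hπcases : (π 0 = 0 ∧ π 1 = 1) ∨ (π 0 = 1 ∧ π 1 = 0) := by
      have h2 : ∀ i : Fin 2, i = 0 ∨ i = 1 := by decide
      have hne : π 0 ≠ π 1 := fun h => absurd (π.injective h) (by decide)
      rcases h2 (π 0) with h|h <;> rcases h2 (π 1) with h'|h' <;>
        first
        | exact absurd (h.trans h'.symm) hne
        | exact Or.inl ⟨h, h'⟩
        | exact Or.inr ⟨h, h'⟩
    simp only at hmono hmony hcr01
    rcases hπcases with ⟨h0, h1⟩ | ⟨h0, h1⟩ <;> rw [h0, h1] at hmono hmony hcr01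
    · exact endgame u v _ _ _ _ rsum esum rprod eprod rmix h01 h02 h12 hmono hmony hcr01
    · exact endgame u v ((D 1 1).re) ((D 0 0).re) ((E 1 1).re) ((E 0 0).re)
        (by linarith) (by linarith) (by linear_combination rprod)
        (by linear_combination eprod) (by linear_combination rmix)
        h01 h02 h12 hmono hmony hcr01
  · rintro ⟨t, ht0, ht1, huv⟩
    have hu0 : u 0 = t * v 0 := by rw [huv]; simp
    have hu1 : u 1 = t * v 1 := by rw [huv]; simp
    have hu2 : u 2 = t * v 2 := by rw [huv]; simp
    by_cases hab : v 0 = 0 ∧ v 1 = 0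
    · have hsimp : ∀ A : Matrix (Fin 2) (Fin 2) ℂ, (1 : Matrix (Fin 2) (Fin 2) ℂ)ᴴ * A * 1 = A :=
        fun A => by simp
      refine ⟨1, one_mem _, ?_, ?_, ?_⟩
      · rw [hsimp]
        intro i j hij
        fin_cases i <;> fin_cases j <;> simp_all [bloch_eq, hu0, hu1, hab.1, hab.2]
      · rw [hsimp]
        intro i j hij
        fin_cases i <;> fin_cases j <;> simp_all [bloch_eq, hab.1, hab.2]
      · simp only [hsimp]
        rcases le_or_gt 0 (v 2) with hc | hc
        · apply bayesLE_of_id <;>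
            · simp [bloch_eq, Complex.div_re]
              nlinarith [mul_nonneg ht0 hc, hu2]
        · apply bayesLE_of_swap <;>
            · simp [bloch_eq, Complex.div_re]
              nlinarith [hu2]
    · have habne : v 0 ≠ 0 ∨ v 1 ≠ 0 := by tauto
      have hab2 : 0 < v 0^2 + v 1^2 := by rcases habne with h|h <;> positivity
      set r := Real.sqrt (v 0^2 + v 1^2 + v 2^2) with hrdef
      have hr2 : r^2 = v 0^2 + v 1^2 + v 2^2 := Real.sq_sqrt (by positivity)
      have hrpos : 0 < r := Real.sqrt_pos.mpr (by nlinarith)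
      have hcltr : v 2 < r := by nlinarith
      have hcgtr : -r < v 2 := by nlinarith
      set n1 := Real.sqrt (2*r*(r - v 2)) with hn1def
      set n2 := Real.sqrt (2*r*(r + v 2)) with hn2def
      have hn1pos : 0 < n1 := Real.sqrt_pos.mpr (by nlinarith)
      have hn2pos : 0 < n2 := Real.sqrt_pos.mpr (by nlinarith)
      have hn1sq : n1^2 = 2*r*(r - v 2) := Real.sq_sqrt (by nlinarith)
      have hn2sq : n2^2 = 2*r*(r + v 2) := Real.sq_sqrt (by nlinarith)
      have hstar : star (Ud (v 0) (v 1) (v 2) r n1 n2) * Ud (v 0) (v 1) (v 2) r n1 n2 = 1 :=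
        Ud_unitary _ _ _ _ _ _ hr2 hn1sq hn2sq hn1pos hn2pos
      have hUU : (Ud (v 0) (v 1) (v 2) r n1 n2)ᴴ * Ud (v 0) (v 1) (v 2) r n1 n2 = 1 := by
        rw [← Matrix.star_eq_conjTranspose]; exact hstar
      have hmu := Ud_mul (v 0) (v 1) (v 2) r n1 n2 hr2 hn1pos hn2pos t u hu0 hu1 hu2
      have hmv := Ud_mul (v 0) (v 1) (v 2) r n1 n2 hr2 hn1pos hn2pos 1 v
        (by ring) (by ring) (by ring)
      have hDt : (Ud (v 0) (v 1) (v 2) r n1 n2)ᴴ * bloch u * Ud (v 0) (v 1) (v 2) r n1 n2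
          = !![(((1+t*r)/2 : ℝ):ℂ), 0; 0, (((1-t*r)/2 : ℝ):ℂ)] := by
        rw [Matrix.mul_assoc, hmu, ← Matrix.mul_assoc, hUU, Matrix.one_mul]
      have hEt : (Ud (v 0) (v 1) (v 2) r n1 n2)ᴴ * bloch v * Ud (v 0) (v 1) (v 2) r n1 n2
          = !![(((1+1*r)/2 : ℝ):ℂ), 0; 0, (((1-1*r)/2 : ℝ):ℂ)] := by
        rw [Matrix.mul_assoc, hmv, ← Matrix.mul_assoc, hUU, Matrix.one_mul]
      refine ⟨Ud (v 0) (v 1) (v 2) r n1 n2, Matrix.mem_unitaryGroup_iff'.mpr hstar, ?_, ?_, ?_⟩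
      · rw [hDt]; intro i j hij; fin_cases i <;> fin_cases j <;> simp_all
      · rw [hEt]; intro i j hij; fin_cases i <;> fin_cases j <;> simp_all
      · simp only [hDt, hEt]
        apply bayesLE_of_id
        · simp
          nlinarith [mul_nonneg ht0 hrpos.le]
        · simp
          nlinarith [hrpos]
        · simp
          nlinarith [mul_le_mul_of_nonneg_right ht1 hrpos.le, mul_nonneg ht0 hrpos.le]
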